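/- arXiv:1902.11173 — 5 statements merged into one kernel-verified Lean document; each statement's English description precedes it below -/
import Mathlib

section
/- For fixed σ > 0, α > 0 and b ∈ ℝ, the function a ↦ s(a,b) is differentiable on (0,∞) with derivative a ↦ s(a, b − α). Consequently, for any m′ ∈ ℝ the single-pixel negative Poisson–Gaussian log-likelihood F(m) = m − ln s(m, m′) is differentiable on (0,∞) with derivative F′(m) = 1 − s(m, m′ − α)/s(m, m′). -/
/-- The Poisson–Gaussian series `s(a,b) = Σ_{j} (a^j / j!) exp(−(b − α j)² / (2σ²))`. -/
noncomputable def pgSeries (σ α a b : ℝ) : ℝ :=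
  ∑' j : ℕ, (a ^ j / (Nat.factorial j : ℝ)) * Real.exp (-(b - α * j) ^ 2 / (2 * σ ^ 2))

/-!
Writing `c j = exp(−(b − α j)² / (2σ²)) ∈ (0, 1]`, the series `s(·, b) = Σ c j x^j / j!` is an
exponential generating function with bounded coefficients. Such a series may be differentiated
term by term on every ball, the derivative bounds being dominated by the exponential series of the
radius; differentiating shifts the coefficients, and `c (j + 1)` is the coefficient sequence for
`b − α`. Since `s(m, m') > 0` for `m ≥ 0`, the formula for `F'` is the chain rule for `log`.
-/

open Real Nat

section BoundedCoefficients

variable {c : ℕ → ℝ} {C : ℝ}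

theorem summable_pow_div_factorial_mul (hc : ∀ j, |c j| ≤ C) (x : ℝ) :
    Summable fun j => x ^ j / (j ! : ℝ) * c j := by
  refine (Real.summable_pow_div_factorial |x| |>.mul_right C).of_norm_bounded fun j => ?_
  rw [norm_mul, norm_div, norm_pow, Real.norm_eq_abs, RCLike.norm_natCast]
  gcongr
  exact hc j

theorem hasDerivAt_tsum_pow_div_factorial_mul (hc : ∀ j, |c j| ≤ C) (x : ℝ) :
    HasDerivAt (fun y => ∑' j, y ^ j / (j ! : ℝ) * c j)
      (∑' j, x ^ j / (j ! : ℝ) * c (j + 1)) x := by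
  have hC : 0 ≤ C := (abs_nonneg _).trans (hc 0)
  set R := |x| + 1
  let g' : ℕ → ℝ → ℝ := fun n y => n * y ^ (n - 1) / (n ! : ℝ) * c n
  have hderiv : ∀ n y, HasDerivAt (fun z => z ^ n / (n ! : ℝ) * c n) (g' n y) y :=
    fun n y => ((hasDerivAt_pow n y).div_const _).mul_const _
  have hshift : ∀ (y : ℝ) (n : ℕ), g' (n + 1) y = y ^ n / (n ! : ℝ) * c (n + 1) := by
    intro y n
    simp only [g', Nat.add_sub_cancel, Nat.factorial_succ, Nat.cast_mul]
    field_simp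
  have hbound : ∀ n, ∀ y ∈ Metric.ball (0 : ℝ) R,
      ‖g' n y‖ ≤ n * R ^ (n - 1) / (n ! : ℝ) * C := by
    intro n y hy
    rw [mem_ball_zero_iff, Real.norm_eq_abs] at hy
    simp only [g', norm_mul, norm_div, norm_pow, Real.norm_eq_abs, RCLike.norm_natCast]
    gcongr
    exact hc n
  have hsummable : Summable fun n : ℕ => n * R ^ (n - 1) / (n ! : ℝ) * C := by
    rw [← summable_nat_add_iff 1]
    refine (Real.summable_pow_div_factorial R |>.mul_right C).congr fun n => ?_
    simp only [Nat.add_sub_cancel, Nat.factorial_succ, Nat.cast_mul]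
    field_simp
  have hx : x ∈ Metric.ball (0 : ℝ) R := by
    rw [mem_ball_zero_iff, Real.norm_eq_abs]
    linarith
  have h := hasDerivAt_tsum_of_isPreconnected hsummable Metric.isOpen_ball
    (convex_ball _ _).isPreconnected (fun n y _ => hderiv n y) hbound hx
    (summable_pow_div_factorial_mul hc x) hx
  have hsum : ∑' n, g' n x = ∑' n, x ^ n / (n ! : ℝ) * c (n + 1) := by
    rw [Summable.tsum_eq_zero_add]
    · simp [g', hshift]
    · rw [← summable_nat_add_iff 1]
      simpa only [hshift] using summable_pow_div_factorial_mul (fun j => hc (j + 1)) x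
  rwa [hsum] at h

end BoundedCoefficients

theorem abs_exp_neg_sq_div_le_one (σ t : ℝ) : |exp (-t ^ 2 / (2 * σ ^ 2))| ≤ 1 := by
  rw [abs_of_pos (exp_pos _), exp_le_one_iff]
  exact div_nonpos_of_nonpos_of_nonneg (neg_nonpos.mpr (sq_nonneg _)) (by positivity)

theorem hasDerivAt_pgSeries (σ α a b : ℝ) :
    HasDerivAt (fun x => pgSeries σ α x b) (pgSeries σ α a (b - α)) a := by
  have h := hasDerivAt_tsum_pow_div_factorial_mul
    (fun j => abs_exp_neg_sq_div_le_one σ (b - α * j)) a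
  unfold pgSeries
  convert h using 1
  refine tsum_congr fun j => ?_
  push_cast
  ring_nf

theorem pgSeries_pos (σ α b : ℝ) {a : ℝ} (ha : 0 ≤ a) : 0 < pgSeries σ α a b := by
  have hs := summable_pow_div_factorial_mul (fun j => abs_exp_neg_sq_div_le_one σ (b - α * j)) a
  refine lt_of_lt_of_le ?_ (hs.le_tsum 0 fun j _ => by positivity)
  simp [exp_pos]

theorem stmt_1_general (σ α : ℝ) (b : ℝ) :
    (∀ a : ℝ, 0 < a → HasDerivAt (fun x => pgSeries σ α x b) (pgSeries σ α a (b - α)) a) ∧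
    (∀ m' m : ℝ, 0 < m →
      HasDerivAt (fun x => x - Real.log (pgSeries σ α x m'))
        (1 - pgSeries σ α m (m' - α) / pgSeries σ α m m') m) :=
  ⟨fun a _ => hasDerivAt_pgSeries σ α a b, fun m' m hm =>
    (hasDerivAt_id' m).sub ((hasDerivAt_pgSeries σ α m m').log (pgSeries_pos σ α m' hm.le).ne')⟩

theorem stmt_1 (σ α : ℝ) (hσ : 0 < σ) (hα : 0 < α) (b : ℝ) :
    (∀ a : ℝ, 0 < a → HasDerivAt (fun x => pgSeries σ α x b) (pgSeries σ α a (b - α)) a) ∧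
    (∀ m' m : ℝ, 0 < m →
      HasDerivAt (fun x => x - Real.log (pgSeries σ α x m'))
        (1 - pgSeries σ α m (m' - α) / pgSeries σ α m m') m) :=
  stmt_1_general σ α b
end

section
/- (Proposition 3: convergence of the damped-Newton / projected ε-subgradient iteration, scalar form.) Let f : ℝ → ℝ be convex and continuous, let l ≤ u be reals, and let C > 0, C₂ > 0, ρ > 0. Let (x_k) be a sequence in [l,u] with x_{k+1} = proj_{[l,u]}(x_k − α_k·u_k/d_k), where: α_k = C/(k+1); d_k is a real number with (1 + C₂/(k+1)²)^{−1/2} ≤ d_k ≤ (1 + C₂/(k+1)²)^{1/2}; u_k is an ε_k-subgradient of f on [l,u] at x_k, i.e. f(y) ≥ f(x_k) + u_k·(y − x_k) − ε_k for all y ∈ [l,u]; |u_k| ≤ ρ for all k; ε_k ≥ 0, ε_k → 0, and Σ_k α_k·ε_k < ∞. Then (x_k) converges to a point x* that minimizes f over [l,u]. -/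
open Filter

lemma my_clamp_sq (l u w z : ℝ) (hlw : l ≤ w) (hwu : w ≤ u) :
    (max l (min z u) - w)^2 ≤ (z - w)^2 := by
  rcases le_total z l with h | h
  · rcases le_total z u with h2 | h2
    · rw [min_eq_left h2, max_eq_left h]; nlinarith
    · rw [min_eq_right h2, max_eq_right (hlw.trans hwu)]; nlinarith
  · rcases le_total z u with h2 | h2
    · rw [min_eq_left h2, max_eq_right h]
    · rw [min_eq_right h2, max_eq_right (hlw.trans hwu)]; nlinarith

lemma my_quasi (a b : ℕ → ℝ) (ha : ∀ k, 0 ≤ a k) (hb : ∀ k, 0 ≤ b k)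
    (hsb : Summable b) (hstep : ∀ k, a (k+1) ≤ a k + b k) :
    ∃ L, Tendsto a atTop (nhds L) := by
  set S : ℕ → ℝ := fun k => ∑ j ∈ Finset.range k, b j with hS
  have hSt : Tendsto S atTop (nhds (∑' j, b j)) := hsb.hasSum.tendsto_sum_nat
  have hanti : Antitone (fun k => a k - S k) := by
    apply antitone_nat_of_succ_le
    intro k
    have h1 := hstep k
    simp only [hS, Finset.sum_range_succ]
    linarith
  have hbdd : BddBelow (Set.range fun k => a k - S k) := by
    refine ⟨-∑' j, b j, ?_⟩
    rintro _ ⟨k, rfl⟩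
    have h1 : S k ≤ ∑' j, b j := Summable.sum_le_tsum _ (fun j _ => hb j) hsb
    have := ha k
    simp only
    linarith
  obtain hT := tendsto_atTop_ciInf hanti hbdd
  refine ⟨(⨅ k, (a k - S k)) + ∑' j, b j, ?_⟩
  have := hT.add hSt
  simpa using this

set_option maxHeartbeats 4000000 in
theorem stmt_6 (f : ℝ → ℝ) (hconv : ConvexOn ℝ Set.univ f) (hcont : Continuous f)
    (l u : ℝ) (hlu : l ≤ u) (C C₂ ρ : ℝ) (hC : 0 < C) (hC₂ : 0 < C₂) (hρ : 0 < ρ)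
    (x usub d ε : ℕ → ℝ)
    (hxmem : ∀ k, x k ∈ Set.Icc l u)
    (hd : ∀ k : ℕ, (Real.sqrt (1 + C₂ / ((k : ℝ) + 1) ^ 2))⁻¹ ≤ d k ∧
               d k ≤ Real.sqrt (1 + C₂ / ((k : ℝ) + 1) ^ 2))
    (hrec : ∀ k : ℕ, x (k + 1) = max l (min (x k - (C / ((k : ℝ) + 1)) * usub k / d k) u))
    (hsub : ∀ k, ∀ y ∈ Set.Icc l u, f y ≥ f (x k) + usub k * (y - x k) - ε k)
    (hbd : ∀ k, |usub k| ≤ ρ)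
    (hε0 : ∀ k, 0 ≤ ε k)
    (hεlim : Filter.Tendsto ε Filter.atTop (nhds 0))
    (hsum : Summable (fun k : ℕ => (C / ((k : ℝ) + 1)) * ε k)) :
    ∃ xstar ∈ Set.Icc l u,
      Filter.Tendsto x Filter.atTop (nhds xstar) ∧ ∀ y ∈ Set.Icc l u, f xstar ≤ f y := by
  -- notation
  set α : ℕ → ℝ := fun k => C / ((k : ℝ) + 1) with hα
  have hαpos : ∀ k, 0 < α k := fun k => div_pos hC (by positivity)
  set D : ℝ := Real.sqrt (1 + C₂) with hDdef
  have hD1 : 1 ≤ D := by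
    nlinarith [Real.sq_sqrt (show (0:ℝ) ≤ 1+C₂ by linarith), Real.sqrt_nonneg (1+C₂)]
  have hDpos : 0 < D := lt_of_lt_of_le one_pos hD1
  -- d bounds
  have hdk : ∀ k, D⁻¹ ≤ d k ∧ d k ≤ D := by
    intro k
    have hk1 : (1:ℝ) ≤ ((k:ℝ)+1)^2 := by nlinarith [Nat.cast_nonneg (α := ℝ) k]
    have harg : C₂ / ((k:ℝ)+1)^2 ≤ C₂ := by
      rw [div_le_iff₀ (by positivity)]; nlinarith
    have hsq : Real.sqrt (1 + C₂ / ((k:ℝ)+1)^2) ≤ D :=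
      Real.sqrt_le_sqrt (by linarith)
    have hsqpos : 0 < Real.sqrt (1 + C₂ / ((k:ℝ)+1)^2) := by
      apply Real.sqrt_pos.mpr; positivity
    constructor
    · exact le_trans (inv_anti₀ hsqpos hsq) (hd k).1
    · exact le_trans (hd k).2 hsq
  have hdpos : ∀ k, 0 < d k := fun k => lt_of_lt_of_le (by positivity) (hdk k).1
  -- key per-step inequality
  have key : ∀ w ∈ Set.Icc l u, ∀ k,
      (x (k+1) - w)^2 ≤ (x k - w)^2 - 2*(α k / d k)*(f (x k) - f w - ε k)
        + (α k * usub k / d k)^2 := by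
    intro w hw k
    have h1 : (x (k+1) - w)^2 ≤ (x k - α k * usub k / d k - w)^2 := by
      rw [hrec k]
      exact my_clamp_sq l u w _ hw.1 hw.2
    have h2 : usub k * (x k - w) ≥ f (x k) - f w - ε k := by
      have := hsub k w hw
      nlinarith
    have h3 : 0 ≤ α k / d k := le_of_lt (div_pos (hαpos k) (hdpos k))
    have h4 : (α k / d k) * (f (x k) - f w - ε k) ≤ (α k / d k) * (usub k * (x k - w)) :=
      mul_le_mul_of_nonneg_left h2 h3
    have hne : d k ≠ 0 := ne_of_gt (hdpos k)
    have hexp : (x k - α k * usub k / d k - w)^2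
        = (x k - w)^2 - 2*((α k / d k) * (usub k * (x k - w))) + (α k * usub k / d k)^2 := by
      field_simp
      ring
    nlinarith [h1, h4]
  -- bounds on extra terms
  set b : ℕ → ℝ := fun k => 2*D*(α k * ε k) + D^2*ρ^2*(α k)^2 with hb
  have hb0 : ∀ k, 0 ≤ b k := by
    intro k
    have := hε0 k
    have := (hαpos k).le
    positivity
  have hbsum : Summable b := by
    apply Summable.add
    · exact (hsum.mul_left (2*D))
    · have h1 : Summable (fun k : ℕ => ((k:ℝ)+1)^(-2:ℤ)) := by
        have := Real.summable_one_div_nat_pow.mpr (le_refl 2)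
        have h2 := (summable_nat_add_iff 1).mpr this
        apply h2.congr
        intro k
        push_cast
        rw [zpow_neg, zpow_two]
        field_simp
      have : Summable (fun k : ℕ => (D^2*ρ^2*C^2) * ((k:ℝ)+1)^(-2:ℤ)) := h1.mul_left _
      apply this.congr
      intro k
      simp only [hα]
      rw [zpow_neg, zpow_two]
      field_simp
  -- step inequality simplified
  have step2 : ∀ w ∈ Set.Icc l u, ∀ k,
      (x (k+1) - w)^2 ≤ (x k - w)^2 - 2*(α k / d k)*(f (x k) - f w) + b k := by
    intro w hw k
    have h1 := key w hw k
    have hα' : α k / d k ≤ α k * D := by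
      rw [div_le_iff₀ (hdpos k)]
      have h2 : 1 ≤ d k * D := by
        have := (hdk k).1
        calc (1:ℝ) = D⁻¹ * D := by field_simp
        _ ≤ d k * D := by
          apply mul_le_mul_of_nonneg_right this hDpos.le
      nlinarith [(hαpos k).le]
    have hε' : 2*(α k / d k)*(ε k) ≤ 2*D*(α k * ε k) := by
      have := hε0 k
      nlinarith [hα']
    have hu2 : (α k * usub k / d k)^2 ≤ D^2*ρ^2*(α k)^2 := by
      have h5 : |α k * usub k / d k| ≤ α k * ρ * D := by
        rw [abs_div, abs_mul, abs_of_pos (hαpos k), abs_of_pos (hdpos k)]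
        have h6 : α k * |usub k| ≤ α k * ρ := mul_le_mul_of_nonneg_left (hbd k) (hαpos k).le
        rw [div_le_iff₀ (hdpos k)]
        calc α k * |usub k| ≤ α k * ρ := h6
        _ = α k * ρ * 1 := by ring
        _ ≤ α k * ρ * (d k * D) := by
            apply mul_le_mul_of_nonneg_left _ (by positivity)
            calc (1:ℝ) = D⁻¹ * D := by field_simp
            _ ≤ d k * D := mul_le_mul_of_nonneg_right (hdk k).1 hDpos.le
        _ = α k * ρ * D * d k := by ring
      have := sq_abs (α k * usub k / d k)
      nlinarith [abs_nonneg (α k * usub k / d k), (hαpos k).le, hρ.le, hDpos.le]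
    simp only [hb]
    nlinarith [h1]
  -- existence of minimizer
  obtain ⟨xs, hxs, hxsmin⟩ := IsCompact.exists_isMinOn isCompact_Icc
    (Set.nonempty_Icc.mpr hlu) (hcont.continuousOn)
  have hxsmin' : ∀ y ∈ Set.Icc l u, f xs ≤ f y := fun y hy => hxsmin hy
  set gap : ℕ → ℝ := fun k => f (x k) - f xs with hgap
  have hgap0 : ∀ k, 0 ≤ gap k := fun k => by
    have := hxsmin' (x k) (hxmem k); simp [hgap]; linarith
  -- summability of α * gap
  have hgapsum : Summable (fun k => α k * gap k) := by
    apply summable_of_sum_range_le (c := (D/2) * ((x 0 - xs)^2 + ∑' j, b j))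
    · intro k
      exact mul_nonneg (hαpos k).le (hgap0 k)
    · intro n
      have hkey : ∀ k, α k * gap k
          ≤ (D/2) * ((x k - xs)^2 - (x (k+1) - xs)^2 + b k) := by
        intro k
        have h1 := step2 xs hxs k
        have h2 : α k / D ≤ α k / d k :=
          div_le_div_of_nonneg_left (hαpos k).le (hdpos k) (hdk k).2
        have h4 : 2 * (α k / D) * gap k ≤ 2 * (α k / d k) * gap k := by
          nlinarith [mul_le_mul_of_nonneg_right h2 (hgap0 k)]
        have h5 : 2 * (α k / d k) * gap k
            ≤ (x k - xs)^2 - (x (k+1) - xs)^2 + b k := by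
          simp only [hgap]; linarith
        have h6 : 2 * (α k / D) * gap k ≤ (x k - xs)^2 - (x (k+1) - xs)^2 + b k :=
          h4.trans h5
        have h7 := mul_le_mul_of_nonneg_left h6 (show (0:ℝ) ≤ D/2 by positivity)
        have h8 : (D/2) * (2 * (α k / D) * gap k) = α k * gap k := by
          field_simp
        linarith
      have hsum1 : ∑ k ∈ Finset.range n, (α k * gap k)
          ≤ ∑ k ∈ Finset.range n, (D/2) * ((x k - xs)^2 - (x (k+1) - xs)^2 + b k) :=
        Finset.sum_le_sum (fun k _ => hkey k)
      have htel : ∑ k ∈ Finset.range n, ((x k - xs)^2 - (x (k+1) - xs)^2)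
          = (x 0 - xs)^2 - (x n - xs)^2 := by
        rw [← Finset.sum_range_sub' (fun k => (x k - xs)^2) n]
      have hbn : ∑ k ∈ Finset.range n, b k ≤ ∑' j, b j :=
        Summable.sum_le_tsum _ (fun j _ => hb0 j) hbsum
      have h9 : ∑ k ∈ Finset.range n, (D/2) * ((x k - xs)^2 - (x (k+1) - xs)^2 + b k)
          = (D/2) * (((x 0 - xs)^2 - (x n - xs)^2) + ∑ k ∈ Finset.range n, b k) := by
        rw [← Finset.mul_sum, Finset.sum_add_distrib, htel]
      rw [h9] at hsum1
      have h10 : (D/2) * (((x 0 - xs)^2 - (x n - xs)^2) + ∑ k ∈ Finset.range n, b k)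
          ≤ (D/2) * ((x 0 - xs)^2 + ∑' j, b j) := by
        apply mul_le_mul_of_nonneg_left _ (show (0:ℝ) ≤ D/2 by positivity)
        nlinarith [sq_nonneg (x n - xs)]
      linarith
  -- α not summable
  have hαns : ¬ Summable α := by
    intro hs
    have h1 : Summable (fun k : ℕ => 1 / ((k:ℝ)+1)) := by
      have := hs.mul_left C⁻¹
      apply this.congr
      intro k
      simp only [hα]
      rw [show C⁻¹ * (C / ((k:ℝ)+1)) = (C⁻¹ * C) / ((k:ℝ)+1) by ring,
        inv_mul_cancel₀ hC.ne']
    have h2 : Summable (fun k : ℕ => 1 / ((k:ℕ)+1:ℝ)) := h1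
    rw [show (fun k : ℕ => 1 / ((k:ℕ)+1:ℝ)) = (fun k : ℕ => 1 / (((k+1):ℕ):ℝ)) by
      funext k; push_cast; ring] at h2
    have h3 := (summable_nat_add_iff (f := fun n : ℕ => 1/((n:ℕ):ℝ)) 1).mp h2
    exact Real.not_summable_one_div_natCast h3
  -- frequently small gap
  have P : ∀ N : ℕ, ∀ δ : ℝ, 0 < δ → ∃ k, N ≤ k ∧ gap k < δ := by
    intro N δ hδ
    by_contra hcon
    push_neg at hcon
    have h1 : ∀ k, δ * α (k + N) ≤ α (k + N) * gap (k + N) := by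
      intro k
      have := hcon (k + N) (Nat.le_add_left N k)
      nlinarith [(hαpos (k+N)).le]
    have h2 : Summable (fun k => α (k + N) * gap (k + N)) :=
      ((summable_nat_add_iff N).mpr hgapsum)
    have h3 : Summable (fun k => δ * α (k + N)) := by
      apply Summable.of_nonneg_of_le (fun k => by positivity) (fun k => h1 k) h2
    have h4 : Summable (fun k => α (k + N)) := by
      have := h3.mul_left δ⁻¹
      apply this.congr
      intro k; field_simp
    exact hαns ((summable_nat_add_iff N).mp h4)
  -- build subsequence with gap → 0
  have P' : ∀ N j : ℕ, ∃ k, N ≤ k ∧ gap k < 1/((j:ℝ)+1) := by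
    intro N j; exact P N _ (by positivity)
  choose g hg1 hg2 using P'
  set φ : ℕ → ℕ := fun j => Nat.rec (g 0 0) (fun j ih => g (ih+1) (j+1)) j with hφ
  have hφmono : StrictMono φ := by
    apply strictMono_nat_of_lt_succ
    intro j
    have := hg1 (φ j + 1) (j+1)
    calc φ j < φ j + 1 := Nat.lt_succ_self _
    _ ≤ g (φ j + 1) (j+1) := this
    _ = φ (j+1) := rfl
  have hφgap : ∀ j, gap (φ j) < 1/((j:ℝ)+1) := by
    intro j
    cases j with
    | zero => exact hg2 0 0
    | succ j => exact hg2 (φ j + 1) (j+1)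
  have hgapφ : Tendsto (fun j => gap (φ j)) atTop (nhds 0) := by
    apply squeeze_zero (fun j => hgap0 (φ j)) (fun j => (hφgap j).le)
    exact tendsto_one_div_add_atTop_nhds_zero_nat
  -- compactness: further subsequence converging
  obtain ⟨w, hw, ψ, hψmono, hψlim⟩ :=
    IsCompact.tendsto_subseq (isCompact_Icc (a := l) (b := u)) (fun j => hxmem (φ j))
  -- f w = f xs
  have hfw : f w = f xs := by
    have h1 : Tendsto (fun j => f (x (φ (ψ j)))) atTop (nhds (f w)) :=
      (hcont.tendsto w).comp hψlim
    have h2 : Tendsto (fun j => gap (φ (ψ j))) atTop (nhds 0) :=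
      hgapφ.comp hψmono.tendsto_atTop
    have h3 : Tendsto (fun j => f (x (φ (ψ j)))) atTop (nhds (f xs)) := by
      have := h2.add_const (f xs)
      simp only [hgap, zero_add] at this
      convert this using 2 with j
      ring
    exact tendsto_nhds_unique h1 h3
  have hwmin : ∀ y ∈ Set.Icc l u, f w ≤ f y := by
    intro y hy; rw [hfw]; exact hxsmin' y hy
  -- quasi-Fejer w.r.t. w
  have hstepw : ∀ k, (x (k+1) - w)^2 ≤ (x k - w)^2 + b k := by
    intro k
    have h1 := step2 w hw k
    have h2 : 0 ≤ f (x k) - f w := by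
      have := hwmin (x k) (hxmem k); linarith
    have h3 : 0 ≤ 2 * (α k / d k) * (f (x k) - f w) :=
      mul_nonneg (mul_nonneg (by norm_num) (div_pos (hαpos k) (hdpos k)).le) h2
    ring_nf at h1 h3 ⊢
    linarith
  obtain ⟨L, hL⟩ := my_quasi (fun k => (x k - w)^2) b (fun k => sq_nonneg _) hb0 hbsum hstepw
  -- L = 0 via subsequence
  have hsub0 : Tendsto (fun j => (x (φ (ψ j)) - w)^2) atTop (nhds 0) := by
    have h1 : Tendsto (fun j => x (φ (ψ j)) - w) atTop (nhds 0) := by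
      have := hψlim.sub_const w
      simpa using this
    have := h1.pow 2
    simpa using this
  have hsubL : Tendsto (fun j => (x (φ (ψ j)) - w)^2) atTop (nhds L) :=
    hL.comp ((hφmono.comp hψmono).tendsto_atTop)
  have hL0 : L = 0 := tendsto_nhds_unique hsubL hsub0
  rw [hL0] at hL
  -- conclude x → w
  have hxw : Tendsto x atTop (nhds w) := by
    rw [tendsto_iff_dist_tendsto_zero]
    have h1 : Tendsto (fun k => Real.sqrt ((x k - w)^2)) atTop (nhds 0) := by
      have := (Real.continuous_sqrt.tendsto 0).comp hL
      simpa [Function.comp_def] using this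
    apply h1.congr
    intro k
    rw [Real.sqrt_sq_eq_abs, Real.dist_eq]
  exact ⟨w, hw, hxw, hwmin⟩
end

section
/- (Proposition 5, main inequality: sufficiency of the verifiable termination test.) Let N ≥ 1, β > 0, k ≥ 1, and let η_0, …, η_k and η̃_0, …, η̃_k be vectors in ℝ^N with ‖η_i − η̃_i‖ ≤ δ_i for each 0 ≤ i ≤ k, where δ_i ≥ 0. Set w = −β·Σ_{i=0}^{k−1} η_i and w̃ = −β·Σ_{i=0}^{k−1} η̃_i. Then for every m ∈ ℝ^N: 2·|⟨w − m, η_k⟩| + ‖η_k‖² ≤ 2·|⟨w̃ − m, η̃_k⟩| + (‖η̃_k‖ + δ_k)² + 2‖w̃ − m‖·δ_k + 2β·(Σ_{i=0}^{k−1} δ_i)·(‖η̃_k‖ + δ_k). Consequently, for any real c > 0, ρ < 1 and any vector v ∈ ℝ^N, if the right-hand side divided by (c + ‖v − m‖²) is < ρ, then (2|⟨w − m, η_k⟩| + ‖η_k‖²)/(c + ‖v − m‖²) < ρ. -/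
/-!
Writing `w = w̃ + (w - w̃)` and `η_k = η̃_k + (η_k - η̃_k)` splits `⟪w - m, η_k⟫` into the computable
term `⟪w̃ - m, η̃_k⟫` and two error terms, each bounded by Cauchy–Schwarz, using
`‖w - w̃‖ ≤ β Σ_{i<k} δ_i` and `‖η_k‖ ≤ ‖η̃_k‖ + δ_k`. Dividing by the positive denominator
transfers the test to the exact quantity.
-/

open scoped RealInnerProductSpace

lemma norm_le_norm_add_of_norm_sub_le {E : Type*} [SeminormedAddCommGroup E] {y y' : E} {b : ℝ}
    (hy : ‖y - y'‖ ≤ b) : ‖y‖ ≤ ‖y'‖ + b :=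
  (norm_le_norm_add_norm_sub' y y').trans (by gcongr)

section Perturbation

variable {E : Type*} [NormedAddCommGroup E] [InnerProductSpace ℝ E]

lemma norm_smul_sum_sub_smul_sum_le {ι : Type*} (s : Finset ι) (c : ℝ) {f g : ι → E}
    {δ : ι → ℝ} (h : ∀ i ∈ s, ‖f i - g i‖ ≤ δ i) :
    ‖c • ∑ i ∈ s, f i - c • ∑ i ∈ s, g i‖ ≤ |c| * ∑ i ∈ s, δ i := by
  rw [← smul_sub, ← Finset.sum_sub_distrib, norm_smul, Real.norm_eq_abs]
  gcongr
  exact (norm_sum_le _ _).trans (Finset.sum_le_sum h)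

lemma abs_inner_le_of_norm_sub_le {x x' y y' : E} {a b : ℝ}
    (hx : ‖x - x'‖ ≤ a) (hy : ‖y - y'‖ ≤ b) :
    |⟪x, y⟫| ≤ |⟪x', y'⟫| + ‖x'‖ * b + a * (‖y'‖ + b) := by
  have hy_norm := norm_le_norm_add_of_norm_sub_le hy
  have hsplit : ⟪x, y⟫ = ⟪x', y'⟫ + ⟪x', y - y'⟫ + ⟪x - x', y⟫ := by
    simp only [inner_sub_left, inner_sub_right]
    ring
  have hfirst : |⟪x', y - y'⟫| ≤ ‖x'‖ * b :=
    (abs_real_inner_le_norm _ _).trans (by gcongr)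
  have hsecond : |⟪x - x', y⟫| ≤ a * (‖y'‖ + b) :=
    (abs_real_inner_le_norm _ _).trans
      (mul_le_mul hx hy_norm (norm_nonneg _) ((norm_nonneg _).trans hx))
  rw [hsplit]
  linarith [abs_add_three ⟪x', y'⟫ ⟪x', y - y'⟫ ⟪x - x', y⟫]

lemma two_mul_abs_inner_add_sq_le_of_norm_sub_le {x x' y y' : E} {a b : ℝ}
    (hx : ‖x - x'‖ ≤ a) (hy : ‖y - y'‖ ≤ b) :
    2 * |⟪x, y⟫| + ‖y‖ ^ 2 ≤
      2 * |⟪x', y'⟫| + (‖y'‖ + b) ^ 2 + 2 * ‖x'‖ * b + 2 * a * (‖y'‖ + b) := by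
  have hy_norm := norm_le_norm_add_of_norm_sub_le hy
  have hsq : ‖y‖ ^ 2 ≤ (‖y'‖ + b) ^ 2 := pow_le_pow_left₀ (norm_nonneg _) hy_norm 2
  linarith [abs_inner_le_of_norm_sub_le hx hy]

end Perturbation

theorem stmt_8_general (N : ℕ) (β : ℝ) (hβ : 0 < β) (k : ℕ)
    (η ηa : ℕ → EuclideanSpace ℝ (Fin N)) (δ : ℕ → ℝ)
    (herr : ∀ i ≤ k, ‖η i - ηa i‖ ≤ δ i)
    (m : EuclideanSpace ℝ (Fin N)) :
    (2 * |⟪(-β) • (∑ i ∈ Finset.range k, η i) - m, η k⟫| + ‖η k‖ ^ 2 ≤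
      2 * |⟪(-β) • (∑ i ∈ Finset.range k, ηa i) - m, ηa k⟫| + (‖ηa k‖ + δ k) ^ 2 +
        2 * ‖(-β) • (∑ i ∈ Finset.range k, ηa i) - m‖ * δ k +
        2 * β * (∑ i ∈ Finset.range k, δ i) * (‖ηa k‖ + δ k)) ∧
    (∀ (c ρ : ℝ) (v : EuclideanSpace ℝ (Fin N)), 0 < c → ρ < 1 →
      (2 * |⟪(-β) • (∑ i ∈ Finset.range k, ηa i) - m, ηa k⟫| + (‖ηa k‖ + δ k) ^ 2 +
        2 * ‖(-β) • (∑ i ∈ Finset.range k, ηa i) - m‖ * δ k +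
        2 * β * (∑ i ∈ Finset.range k, δ i) * (‖ηa k‖ + δ k)) / (c + ‖v - m‖ ^ 2) < ρ →
      (2 * |⟪(-β) • (∑ i ∈ Finset.range k, η i) - m, η k⟫| + ‖η k‖ ^ 2) /
        (c + ‖v - m‖ ^ 2) < ρ) := by
  have hw : ‖((-β) • ∑ i ∈ Finset.range k, η i - m) - ((-β) • ∑ i ∈ Finset.range k, ηa i - m)‖
      ≤ β * ∑ i ∈ Finset.range k, δ i := by
    rw [sub_sub_sub_cancel_right]
    refine (norm_smul_sum_sub_smul_sum_le _ _ fun i hi =>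
      herr i (Finset.mem_range.mp hi).le).trans_eq ?_
    rw [abs_neg, abs_of_pos hβ]
  have hmain := two_mul_abs_inner_add_sq_le_of_norm_sub_le hw (herr k le_rfl)
  rw [← mul_assoc] at hmain
  refine ⟨hmain, fun c ρ v hc _ htest => ?_⟩
  exact (div_le_div_of_nonneg_right hmain (by positivity)).trans_lt htest

theorem stmt_8 (N : ℕ) (hN : 1 ≤ N) (β : ℝ) (hβ : 0 < β) (k : ℕ) (hk : 1 ≤ k)
    (η ηa : ℕ → EuclideanSpace ℝ (Fin N)) (δ : ℕ → ℝ)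
    (hδ : ∀ i ≤ k, 0 ≤ δ i) (herr : ∀ i ≤ k, ‖η i - ηa i‖ ≤ δ i)
    (m : EuclideanSpace ℝ (Fin N)) :
    (2 * |⟪(-β) • (∑ i ∈ Finset.range k, η i) - m, η k⟫| + ‖η k‖ ^ 2 ≤
      2 * |⟪(-β) • (∑ i ∈ Finset.range k, ηa i) - m, ηa k⟫| + (‖ηa k‖ + δ k) ^ 2 +
        2 * ‖(-β) • (∑ i ∈ Finset.range k, ηa i) - m‖ * δ k +
        2 * β * (∑ i ∈ Finset.range k, δ i) * (‖ηa k‖ + δ k)) ∧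
    (∀ (c ρ : ℝ) (v : EuclideanSpace ℝ (Fin N)), 0 < c → ρ < 1 →
      (2 * |⟪(-β) • (∑ i ∈ Finset.range k, ηa i) - m, ηa k⟫| + (‖ηa k‖ + δ k) ^ 2 +
        2 * ‖(-β) • (∑ i ∈ Finset.range k, ηa i) - m‖ * δ k +
        2 * β * (∑ i ∈ Finset.range k, δ i) * (‖ηa k‖ + δ k)) / (c + ‖v - m‖ ^ 2) < ρ →
      (2 * |⟪(-β) • (∑ i ∈ Finset.range k, η i) - m, η k⟫| + ‖η k‖ ^ 2) /
        (c + ‖v - m‖ ^ 2) < ρ) :=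
  stmt_8_general N β hβ k η ηa δ herr m
end

section
/- (Uniform gradient-approximation bound.) Let σ > 0, α > 0, u > 0, m ∈ [0, u], m′ ∈ ℝ. Let s̃₁ and s̃₂ be positive reals with s̃₁ ≥ exp(−m′²/(2σ²)), |s̃₁ − s(m, m′)| ≤ ε₁ and |s̃₂ − s(m, m′ − α)| ≤ ε₂, where ε₁, ε₂ ≥ 0. Then |s(m, m′ − α)/s(m, m′) − s̃₂/s̃₁| ≤ exp(m′²/σ²)·(s(m, m′ − α)·ε₁ + s(m, m′)·ε₂) ≤ exp(m′²/σ²)·e^u·(ε₁ + ε₂). -/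
lemma pg_term_nonneg (σ α a b : ℝ) (ha : 0 ≤ a) (j : ℕ) :
    0 ≤ (a ^ j / (Nat.factorial j : ℝ)) * Real.exp (-(b - α * j) ^ 2 / (2 * σ ^ 2)) := by
  apply mul_nonneg
  · positivity
  · exact (Real.exp_pos _).le

lemma pg_term_le (σ α a b : ℝ) (hσ : 0 < σ) (ha : 0 ≤ a) (j : ℕ) :
    (a ^ j / (Nat.factorial j : ℝ)) * Real.exp (-(b - α * j) ^ 2 / (2 * σ ^ 2)) ≤
      a ^ j / (Nat.factorial j : ℝ) := by
  have h1 : Real.exp (-(b - α * j) ^ 2 / (2 * σ ^ 2)) ≤ 1 := by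
    rw [Real.exp_le_one_iff]
    apply div_nonpos_of_nonpos_of_nonneg
    · simp [sq_nonneg]
    · positivity
  calc (a ^ j / (Nat.factorial j : ℝ)) * Real.exp (-(b - α * j) ^ 2 / (2 * σ ^ 2))
      ≤ (a ^ j / (Nat.factorial j : ℝ)) * 1 := by
        apply mul_le_mul_of_nonneg_left h1; positivity
    _ = a ^ j / (Nat.factorial j : ℝ) := by ring

lemma pg_summable (σ α a b : ℝ) (hσ : 0 < σ) (ha : 0 ≤ a) :
    Summable (fun j : ℕ => (a ^ j / (Nat.factorial j : ℝ)) *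
      Real.exp (-(b - α * j) ^ 2 / (2 * σ ^ 2))) :=
  Summable.of_nonneg_of_le (pg_term_nonneg σ α a b ha) (pg_term_le σ α a b hσ ha)
    (Real.summable_pow_div_factorial a)

lemma pg_lb (σ α a b : ℝ) (hσ : 0 < σ) (ha : 0 ≤ a) :
    Real.exp (-b ^ 2 / (2 * σ ^ 2)) ≤ pgSeries σ α a b := by
  have h := Summable.le_tsum (pg_summable σ α a b hσ ha) 0
    (fun j _ => pg_term_nonneg σ α a b ha j)
  simpa [pgSeries] using h

lemma pg_ub (σ α a b : ℝ) (hσ : 0 < σ) (ha : 0 ≤ a) :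
    pgSeries σ α a b ≤ Real.exp a := by
  have h := Summable.tsum_le_tsum (pg_term_le σ α a b hσ ha) (pg_summable σ α a b hσ ha)
    (Real.summable_pow_div_factorial a)
  have he : Real.exp a = ∑' j : ℕ, a ^ j / (Nat.factorial j : ℝ) := by
    rw [Real.exp_eq_exp_ℝ, NormedSpace.exp_eq_tsum_div]
  rw [pgSeries, he]
  exact h

theorem stmt_10 (σ α u m m' : ℝ) (hσ : 0 < σ) (hα : 0 < α) (hu : 0 < u)
    (hm : m ∈ Set.Icc 0 u) (s₁ s₂ ε₁ ε₂ : ℝ) (hs₁ : 0 < s₁) (hs₂ : 0 < s₂)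
    (hε₁ : 0 ≤ ε₁) (hε₂ : 0 ≤ ε₂)
    (hs₁lb : Real.exp (-m' ^ 2 / (2 * σ ^ 2)) ≤ s₁)
    (he₁ : |s₁ - pgSeries σ α m m'| ≤ ε₁)
    (he₂ : |s₂ - pgSeries σ α m (m' - α)| ≤ ε₂) :
    |pgSeries σ α m (m' - α) / pgSeries σ α m m' - s₂ / s₁| ≤
      Real.exp (m' ^ 2 / σ ^ 2) * (pgSeries σ α m (m' - α) * ε₁ + pgSeries σ α m m' * ε₂) ∧
    Real.exp (m' ^ 2 / σ ^ 2) * (pgSeries σ α m (m' - α) * ε₁ + pgSeries σ α m m' * ε₂) ≤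
      Real.exp (m' ^ 2 / σ ^ 2) * Real.exp u * (ε₁ + ε₂) := by
  obtain ⟨hm0, hmu⟩ := hm
  set A := pgSeries σ α m m' with hA
  set B := pgSeries σ α m (m' - α) with hB
  have hAlb : Real.exp (-m' ^ 2 / (2 * σ ^ 2)) ≤ A := pg_lb σ α m m' hσ hm0
  have hBlb : Real.exp (-(m' - α) ^ 2 / (2 * σ ^ 2)) ≤ B := pg_lb σ α m (m' - α) hσ hm0
  have hApos : 0 < A := lt_of_lt_of_le (Real.exp_pos _) hAlb
  have hBpos : 0 < B := lt_of_lt_of_le (Real.exp_pos _) hBlb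
  have hAub : A ≤ Real.exp u := (pg_ub σ α m m' hσ hm0).trans (Real.exp_le_exp.mpr hmu)
  have hBub : B ≤ Real.exp u := (pg_ub σ α m (m' - α) hσ hm0).trans (Real.exp_le_exp.mpr hmu)
  have hE : Real.exp (-m' ^ 2 / (2 * σ ^ 2)) > 0 := Real.exp_pos _
  -- key: 1/(A*s₁) ≤ exp(m'²/σ²)
  have hprod : Real.exp (-m' ^ 2 / (2 * σ ^ 2)) * Real.exp (-m' ^ 2 / (2 * σ ^ 2)) ≤ A * s₁ :=
    mul_le_mul hAlb hs₁lb hE.le hApos.le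
  have hEE : Real.exp (-m' ^ 2 / (2 * σ ^ 2)) * Real.exp (-m' ^ 2 / (2 * σ ^ 2)) =
      Real.exp (-(m' ^ 2 / σ ^ 2)) := by
    rw [← Real.exp_add]
    congr 1
    field_simp
    ring
  have hinv : (A * s₁)⁻¹ ≤ Real.exp (m' ^ 2 / σ ^ 2) := by
    have h1 : Real.exp (-(m' ^ 2 / σ ^ 2)) ≤ A * s₁ := hEE ▸ hprod
    calc (A * s₁)⁻¹ ≤ (Real.exp (-(m' ^ 2 / σ ^ 2)))⁻¹ := by
          apply inv_anti₀ (Real.exp_pos _) h1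
      _ = Real.exp (m' ^ 2 / σ ^ 2) := by rw [← Real.exp_neg, neg_neg]
  constructor
  · have hdiff : B / A - s₂ / s₁ = (B * (s₁ - A) + A * (B - s₂)) / (A * s₁) := by
      field_simp
      ring
    rw [hdiff, abs_div, abs_of_pos (mul_pos hApos hs₁), div_eq_mul_inv]
    have hnum : |B * (s₁ - A) + A * (B - s₂)| ≤ B * ε₁ + A * ε₂ := by
      calc |B * (s₁ - A) + A * (B - s₂)| ≤ |B * (s₁ - A)| + |A * (B - s₂)| := abs_add_le _ _
        _ = B * |s₁ - A| + A * |B - s₂| := by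
            rw [abs_mul, abs_mul, abs_of_pos hBpos, abs_of_pos hApos]
        _ ≤ B * ε₁ + A * ε₂ := by
            have h2 : |B - s₂| ≤ ε₂ := by rw [abs_sub_comm]; exact he₂
            exact add_le_add (mul_le_mul_of_nonneg_left he₁ hBpos.le)
              (mul_le_mul_of_nonneg_left h2 hApos.le)
    calc |B * (s₁ - A) + A * (B - s₂)| * (A * s₁)⁻¹
        ≤ (B * ε₁ + A * ε₂) * Real.exp (m' ^ 2 / σ ^ 2) := by
          apply mul_le_mul hnum hinv (by positivity) (by positivity)
      _ = Real.exp (m' ^ 2 / σ ^ 2) * (B * ε₁ + A * ε₂) := by ring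
  · have h1 : B * ε₁ + A * ε₂ ≤ Real.exp u * ε₁ + Real.exp u * ε₂ :=
      add_le_add (mul_le_mul_of_nonneg_right hBub hε₁) (mul_le_mul_of_nonneg_right hAub hε₂)
    calc Real.exp (m' ^ 2 / σ ^ 2) * (B * ε₁ + A * ε₂)
        ≤ Real.exp (m' ^ 2 / σ ^ 2) * (Real.exp u * ε₁ + Real.exp u * ε₂) := by
          apply mul_le_mul_of_nonneg_left h1 (Real.exp_pos _).le
      _ = Real.exp (m' ^ 2 / σ ^ 2) * Real.exp u * (ε₁ + ε₂) := by ring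
end

section
/- (EM majorization of the Poisson–Gaussian negative log-likelihood.) Let σ > 0, α > 0, m′ ∈ ℝ, and m₀ > 0. For p ∈ ℕ set c_p = (m₀^p/p!)·exp(−(m′ − α·p)²/(2σ²)) and π_p = c_p / s(m₀, m′) (posterior weights), so Σ_p π_p = 1. Then the posterior-mean series q₀ = Σ_{p=0}^∞ p·π_p converges, and for every m > 0: ln s(m, m′) − ln s(m₀, m′) ≥ q₀·ln(m/m₀). Equivalently, F(m) ≤ F(m₀) + (m − m₀) − q₀·ln(m/m₀) for all m > 0, with equality at m = m₀, where F(m) = m − ln s(m, m′); i.e. the EM surrogate G(m) = m − q₀·ln m majorizes F up to an additive constant, touching it at m₀. -/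
/-- The posterior weight `π_p = c_p / s(m₀, m′)` of the hidden Poisson count `p`. -/
noncomputable def pgPosterior (σ α m' m₀ : ℝ) (p : ℕ) : ℝ :=
  (m₀ ^ p / (Nat.factorial p : ℝ)) * Real.exp (-(m' - α * p) ^ 2 / (2 * σ ^ 2)) /
    pgSeries σ α m₀ m'

theorem stmt_12 (σ α : ℝ) (hσ : 0 < σ) (hα : 0 < α) (m' m₀ : ℝ) (hm₀ : 0 < m₀) :
    Summable (fun p : ℕ => (p : ℝ) * pgPosterior σ α m' m₀ p) ∧
    (∀ m : ℝ, 0 < m →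
      Real.log (pgSeries σ α m m') - Real.log (pgSeries σ α m₀ m') ≥
        (∑' p : ℕ, (p : ℝ) * pgPosterior σ α m' m₀ p) * Real.log (m / m₀)) ∧
    (∀ m : ℝ, 0 < m →
      m - Real.log (pgSeries σ α m m') ≤
        (m₀ - Real.log (pgSeries σ α m₀ m')) + (m - m₀) -
          (∑' p : ℕ, (p : ℝ) * pgPosterior σ α m' m₀ p) * Real.log (m / m₀)) := by
  have hg0 : ∀ p : ℕ, 0 < Real.exp (-(m' - α * p) ^ 2 / (2 * σ ^ 2)) :=
    fun p => Real.exp_pos _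
  have hg1 : ∀ p : ℕ, Real.exp (-(m' - α * p) ^ 2 / (2 * σ ^ 2)) ≤ 1 := by
    intro p
    rw [Real.exp_le_one_iff]
    apply div_nonpos_of_nonpos_of_nonneg
    · nlinarith [sq_nonneg (m' - α * p)]
    · positivity
  set g : ℕ → ℝ := fun p => Real.exp (-(m' - α * p) ^ 2 / (2 * σ ^ 2)) with hgdef
  have hsum : ∀ a : ℝ, 0 < a →
      Summable (fun p : ℕ => a ^ p / (Nat.factorial p : ℝ) * g p) := by
    intro a ha
    apply Summable.of_nonneg_of_le (fun p => by positivity) _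
      (Real.summable_pow_div_factorial a)
    intro p
    calc a ^ p / (Nat.factorial p : ℝ) * g p
        ≤ a ^ p / (Nat.factorial p : ℝ) * 1 := by
          apply mul_le_mul_of_nonneg_left (hg1 p) (by positivity)
      _ = a ^ p / (Nat.factorial p : ℝ) := by ring
  have hsum2 : Summable (fun p : ℕ =>
      (p : ℝ) * (m₀ ^ p / (Nat.factorial p : ℝ) * g p)) := by
    apply Summable.of_nonneg_of_le (fun p => by positivity) _
      (Real.summable_pow_div_factorial (2 * m₀))
    intro p
    have h1 : (p : ℝ) ≤ 2 ^ p := by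
      exact_mod_cast (Nat.lt_two_pow_self (n := p)).le
    have h2 : (p : ℝ) * (m₀ ^ p / (Nat.factorial p : ℝ) * g p)
        ≤ 2 ^ p * (m₀ ^ p / (Nat.factorial p : ℝ) * 1) := by
      apply mul_le_mul h1 _ (by positivity) (by positivity)
      apply mul_le_mul_of_nonneg_left (hg1 p) (by positivity)
    calc (p : ℝ) * (m₀ ^ p / (Nat.factorial p : ℝ) * g p)
        ≤ 2 ^ p * (m₀ ^ p / (Nat.factorial p : ℝ) * 1) := h2
      _ = (2 * m₀) ^ p / (Nat.factorial p : ℝ) := by rw [mul_pow]; ring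
  -- positivity of the series
  have hSpos : ∀ a : ℝ, 0 < a → 0 < pgSeries σ α a m' := by
    intro a ha
    have : pgSeries σ α a m' = ∑' p : ℕ, a ^ p / (Nat.factorial p : ℝ) * g p := rfl
    rw [this]
    exact Summable.tsum_pos (hsum a ha) (fun p => by positivity) 0 (by positivity)
  set c : ℕ → ℝ := fun p => m₀ ^ p / (Nat.factorial p : ℝ) * g p with hcdef
  have hc0 : ∀ p, 0 ≤ c p := fun p => by positivity
  have hcsum : Summable c := hsum m₀ hm₀
  set S₀ : ℝ := pgSeries σ α m₀ m' with hS₀def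
  have hS₀ : S₀ = ∑' p : ℕ, c p := rfl
  have hS₀pos : 0 < S₀ := hSpos m₀ hm₀
  set T : ℝ := ∑' p : ℕ, (p : ℝ) * c p with hTdef
  set q₀ : ℝ := T / S₀ with hq₀def
  have hq₀S₀ : q₀ * S₀ = T := div_mul_cancel₀ T hS₀pos.ne'
  have hpost : ∀ p : ℕ, pgPosterior σ α m' m₀ p = c p / S₀ := fun p => rfl
  have hsumπ : Summable (fun p : ℕ => (p : ℝ) * pgPosterior σ α m' m₀ p) := by
    have : (fun p : ℕ => (p : ℝ) * pgPosterior σ α m' m₀ p)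
        = fun p : ℕ => ((p : ℝ) * c p) * S₀⁻¹ := by
      funext p; rw [hpost]; ring
    rw [this]
    exact hsum2.mul_right _
  have htsumπ : (∑' p : ℕ, (p : ℝ) * pgPosterior σ α m' m₀ p) = q₀ := by
    have h1 : (fun p : ℕ => (p : ℝ) * pgPosterior σ α m' m₀ p)
        = fun p : ℕ => ((p : ℝ) * c p) / S₀ := by
      funext p; rw [hpost]; ring
    rw [h1, tsum_div_const]
  -- Key inequality
  have key : ∀ m : ℝ, 0 < m →
      Real.log (pgSeries σ α m m') - Real.log S₀ ≥ q₀ * Real.log (m / m₀) := by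
    intro m hm
    set L : ℝ := Real.log (m / m₀) with hLdef
    have hexpL : Real.exp L = m / m₀ := Real.exp_log (by positivity)
    have hterm : ∀ p : ℕ,
        Real.exp (q₀ * L) * c p + (Real.exp (q₀ * L) * L) * ((p : ℝ) * c p)
          - (Real.exp (q₀ * L) * (q₀ * L)) * c p
        ≤ m ^ p / (Nat.factorial p : ℝ) * g p := by
      intro p
      have hconv : Real.exp (q₀ * L) * (1 + ((p : ℝ) - q₀) * L)
          ≤ Real.exp ((p : ℝ) * L) := by
        have h1 : ((p : ℝ) - q₀) * L + 1 ≤ Real.exp (((p : ℝ) - q₀) * L) :=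
          Real.add_one_le_exp _
        have h2 : Real.exp ((p : ℝ) * L)
            = Real.exp (q₀ * L) * Real.exp (((p : ℝ) - q₀) * L) := by
          rw [← Real.exp_add]; ring_nf
        rw [h2]
        have := mul_le_mul_of_nonneg_left h1 (Real.exp_nonneg (q₀ * L))
        linarith
      have hexp_pow : Real.exp ((p : ℝ) * L) = (m / m₀) ^ p := by
        rw [← hexpL, ← Real.exp_nat_mul]
      have hcm : c p * (m / m₀) ^ p = m ^ p / (Nat.factorial p : ℝ) * g p := by
        rw [hcdef]
        have : (m / m₀) ^ p = m ^ p / m₀ ^ p := div_pow m m₀ p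
        rw [this]
        field_simp
      have hstep : c p * (Real.exp (q₀ * L) * (1 + ((p : ℝ) - q₀) * L))
          ≤ c p * Real.exp ((p : ℝ) * L) :=
        mul_le_mul_of_nonneg_left hconv (hc0 p)
      calc Real.exp (q₀ * L) * c p + (Real.exp (q₀ * L) * L) * ((p : ℝ) * c p)
            - (Real.exp (q₀ * L) * (q₀ * L)) * c p
          = c p * (Real.exp (q₀ * L) * (1 + ((p : ℝ) - q₀) * L)) := by ring
        _ ≤ c p * Real.exp ((p : ℝ) * L) := hstep
        _ = m ^ p / (Nat.factorial p : ℝ) * g p := by rw [hexp_pow, hcm]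
    have hsumL : Summable (fun p : ℕ =>
        Real.exp (q₀ * L) * c p + (Real.exp (q₀ * L) * L) * ((p : ℝ) * c p)
          - (Real.exp (q₀ * L) * (q₀ * L)) * c p) :=
      ((hcsum.mul_left _).add (hsum2.mul_left _)).sub (hcsum.mul_left _)
    have hle : (∑' p : ℕ,
        (Real.exp (q₀ * L) * c p + (Real.exp (q₀ * L) * L) * ((p : ℝ) * c p)
          - (Real.exp (q₀ * L) * (q₀ * L)) * c p))
        ≤ pgSeries σ α m m' := by
      have : pgSeries σ α m m' = ∑' p : ℕ, m ^ p / (Nat.factorial p : ℝ) * g p := rfl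
      rw [this]
      exact Summable.tsum_le_tsum hterm hsumL (hsum m hm)
    have hval : (∑' p : ℕ,
        (Real.exp (q₀ * L) * c p + (Real.exp (q₀ * L) * L) * ((p : ℝ) * c p)
          - (Real.exp (q₀ * L) * (q₀ * L)) * c p))
        = S₀ * Real.exp (q₀ * L) := by
      rw [Summable.tsum_sub ((hcsum.mul_left _).add (hsum2.mul_left _)) (hcsum.mul_left _),
        Summable.tsum_add (hcsum.mul_left _) (hsum2.mul_left _),
        tsum_mul_left, tsum_mul_left, tsum_mul_left]
      rw [← hS₀, ← hTdef, ← hq₀S₀]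
      ring
    rw [hval] at hle
    have hlog : Real.log (S₀ * Real.exp (q₀ * L)) ≤ Real.log (pgSeries σ α m m') :=
      Real.log_le_log (by positivity) hle
    rw [Real.log_mul hS₀pos.ne' (Real.exp_pos _).ne', Real.log_exp] at hlog
    linarith
  refine ⟨hsumπ, ?_, ?_⟩
  · intro m hm
    rw [htsumπ]
    exact key m hm
  · intro m hm
    rw [htsumπ]
    have := key m hm
    linarith
end
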